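/- Suppose p x y > 0 for all x ∈ 𝒳₁ and y ∈ 𝒳₂ (full support). Then any two distinct maximal independent sets W₁ and W₂ of the characteristic graph G_{X₁} are fully connected to each other: every vertex of W₁ is adjacent in G_{X₁} to every vertex of W₂. -/

import Mathlib

/-- The characteristic graph `G_{X₁}` of `X₁` with respect to `X₂`, the joint weights `p`,
and the function `f`. -/
def charGraph {X1 X2 Z : Type*} (f : X1 → X2 → Z) (p : X1 → X2 → ℝ) : SimpleGraph X1 where
  Adj a b := a ≠ b ∧ ∃ y, 0 < p a y ∧ 0 < p b y ∧ f a y ≠ f b y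
  symm := by
    constructor
    rintro a b ⟨hab, y, h1, h2, h3⟩
    exact ⟨hab.symm, y, h2, h1, h3.symm⟩
  loopless := by
    constructor
    rintro a ⟨h, -⟩
    exact h rfl

/-- `W` is an independent set of the simple graph `G`. -/
def IsIndepSetOn {V : Type*} (G : SimpleGraph V) (W : Set V) : Prop :=
  ∀ a ∈ W, ∀ b ∈ W, ¬ G.Adj a b

/-- `W` is a maximal independent set of the simple graph `G`: it is independent and is not a
proper subset of any independent set. -/
def IsMaxIndepSet {V : Type*} (G : SimpleGraph V) (W : Set V) : Prop :=
  IsIndepSetOn G W ∧ ∀ W' : Set V, IsIndepSetOn G W' → W ⊆ W' → W' = W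

/-!
With full support, two vertices of the characteristic graph are non-adjacent exactly when their
rows `f a` and `f b` coincide, so the graph is complete multipartite with the fibres of
`a ↦ f a` as parts. Its maximal independent sets are therefore exactly these fibres, and any two
distinct fibres are completely joined.
-/

theorem charGraph_adj_iff_of_pos {X1 X2 Z : Type*} {f : X1 → X2 → Z} {p : X1 → X2 → ℝ}
    (hp : ∀ x y, 0 < p x y) {a b : X1} : (charGraph f p).Adj a b ↔ f a ≠ f b := by
  constructor
  · rintro ⟨-, y, -, -, hy⟩ hab
    exact hy (congrFun hab y)
  · intro hab
    obtain ⟨y, hy⟩ := Function.ne_iff.mp hab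
    exact ⟨fun h => hab (h ▸ rfl), y, hp a y, hp b y, hy⟩

section Multipartite

variable {V β : Type*} {G : SimpleGraph V} {g : V → β}

theorem isIndepSetOn_preimage_singleton (hG : ∀ a b, G.Adj a b ↔ g a ≠ g b) (c : β) :
    IsIndepSetOn G (g ⁻¹' {c}) := by
  intro a ha b hb
  rw [hG, not_not, ha, hb]

theorem IsMaxIndepSet.eq_preimage_singleton (hG : ∀ a b, G.Adj a b ↔ g a ≠ g b)
    {W : Set V} (hW : IsMaxIndepSet G W) {a : V} (ha : a ∈ W) : W = g ⁻¹' {g a} := by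
  have hsub : W ⊆ g ⁻¹' {g a} := fun b hb =>
    of_not_not fun hba => hW.1 b hb a ha ((hG b a).mpr hba)
  exact (hW.2 _ (isIndepSetOn_preimage_singleton hG (g a)) hsub).symm

end Multipartite

theorem stmt2_general {X1 X2 Z : Type*}
    (f : X1 → X2 → Z) (p : X1 → X2 → ℝ) (hp : ∀ x y, 0 < p x y)
    (W₁ W₂ : Set X1) (hW₁ : IsMaxIndepSet (charGraph f p) W₁)
    (hW₂ : IsMaxIndepSet (charGraph f p) W₂) (hne : W₁ ≠ W₂) :
    ∀ a ∈ W₁, ∀ b ∈ W₂, (charGraph f p).Adj a b := by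
  have hG : ∀ a b, (charGraph f p).Adj a b ↔ f a ≠ f b := fun _ _ => charGraph_adj_iff_of_pos hp
  intro a ha b hb
  rw [hG]
  intro hab
  apply hne
  rw [hW₁.eq_preimage_singleton hG ha, hW₂.eq_preimage_singleton hG hb, hab]

/-- Under the full-support hypothesis, any two distinct maximal independent sets of the
characteristic graph `G_{X₁}` are fully connected to each other. -/
theorem stmt2 {X1 X2 Z : Type*} [Fintype X1] [Nonempty X1] [Fintype X2] [Nonempty X2]
    (f : X1 → X2 → Z) (p : X1 → X2 → ℝ) (hp : ∀ x y, 0 < p x y)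
    (W₁ W₂ : Set X1) (hW₁ : IsMaxIndepSet (charGraph f p) W₁)
    (hW₂ : IsMaxIndepSet (charGraph f p) W₂) (hne : W₁ ≠ W₂) :
    ∀ a ∈ W₁, ∀ b ∈ W₂, (charGraph f p).Adj a b :=
  stmt2_general f p hp W₁ W₂ hW₁ hW₂ hne
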